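/- arXiv:2404.19662 — 2 statements merged into one kernel-verified Lean document; each statement's English description precedes it below -/
import Mathlib

section
/- For every positive integer p, Σ_{π ∈ P_2^{bi}(2p)} 2^{cc(π)} = Σ_{l=0}^{p} binom(2p,2l) C_l C_{p-l}, where P_2^{bi}(2p) is the set of pair partitions of [2p] whose intersection graph is bipartite, cc(π) is the number of connected components of the intersection graph, and C_k are Catalan numbers. -/
open Finset

def Crosses {n : ℕ} (V W : Finset (Fin n)) : Prop :=
  ∃ i k j l : Fin n, i < k ∧ k < j ∧ j < l ∧ i ∈ V ∧ j ∈ V ∧ k ∈ W ∧ l ∈ W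

def CrossSym {n : ℕ} (V W : Finset (Fin n)) : Prop := Crosses V W ∨ Crosses W V

def IsPartitionOn {n : ℕ} (S : Finset (Fin n)) (π : Finset (Finset (Fin n))) : Prop :=
  (∀ V ∈ π, V.Nonempty ∧ V ⊆ S) ∧ ∀ i ∈ S, ∃! V, V ∈ π ∧ i ∈ V

def IsPairPartitionOn {n : ℕ} (S : Finset (Fin n)) (π : Finset (Finset (Fin n))) : Prop :=
  IsPartitionOn S π ∧ ∀ V ∈ π, V.card = 2

def IsPairPartition (n : ℕ) (π : Finset (Finset (Fin n))) : Prop :=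
  IsPairPartitionOn Finset.univ π

def NoncrossingPart {n : ℕ} (π : Finset (Finset (Fin n))) : Prop :=
  ∀ V ∈ π, ∀ W ∈ π, V ≠ W → ¬ CrossSym V W

def interGraph {n : ℕ} (π : Finset (Finset (Fin n))) :
    SimpleGraph {V : Finset (Fin n) // V ∈ π} where
  Adj V W := V ≠ W ∧ CrossSym V.1 W.1
  symm := by
    constructor
    rintro V W ⟨h1, h2⟩
    exact ⟨h1.symm, h2.symm⟩
  loopless := by constructor; rintro V ⟨h1, _⟩; exact h1 rfl

noncomputable def ccCount {n : ℕ} (π : Finset (Finset (Fin n))) : ℕ :=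
  Nat.card (interGraph π).ConnectedComponent

def IsBipartitePart {n : ℕ} (π : Finset (Finset (Fin n))) : Prop :=
  (interGraph π).Colorable 2

def IsConnectedPart {n : ℕ} (π : Finset (Finset (Fin n))) : Prop :=
  (interGraph π).Connected

open scoped Classical in
noncomputable def crBlocks {n : ℕ} (π : Finset (Finset (Fin n))) : Finset (Finset (Fin n)) :=
  π.filter (fun V => ∃ W ∈ π, W ≠ V ∧ CrossSym V W)

open scoped Classical in
noncomputable def ncrBlocks {n : ℕ} (π : Finset (Finset (Fin n))) : Finset (Finset (Fin n)) :=
  π.filter (fun V => ¬ ∃ W ∈ π, W ≠ V ∧ CrossSym V W)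

noncomputable def crCount {n : ℕ} (π : Finset (Finset (Fin n))) : ℕ := (crBlocks π).card
noncomputable def ncrCount {n : ℕ} (π : Finset (Finset (Fin n))) : ℕ := (ncrBlocks π).card

open scoped Classical in
noncomputable def compPart {n : ℕ} (π : Finset (Finset (Fin n))) : Finset (Finset (Fin n)) :=
  π.attach.image fun V => Finset.univ.filter fun i : Fin n =>
    ∃ W, ∃ hW : W ∈ π, i ∈ W ∧ (interGraph π).Reachable V ⟨W, hW⟩

def restrictPart {n : ℕ} (π : Finset (Finset (Fin n))) (T : Finset (Fin n)) :
    Finset (Finset (Fin n)) :=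
  π.filter (· ⊆ T)

open scoped Classical in
noncomputable def pairPartitions (n : ℕ) : Finset (Finset (Finset (Fin n))) :=
  Finset.univ.filter (IsPairPartition n)

open scoped Classical in
noncomputable def biPairPartitions (n : ℕ) : Finset (Finset (Finset (Fin n))) :=
  (pairPartitions n).filter IsBipartitePart

open scoped Classical in
noncomputable def biconPairPartitions (n : ℕ) : Finset (Finset (Finset (Fin n))) :=
  (biPairPartitions n).filter IsConnectedPart

open scoped Classical in
noncomputable def ncPairPartitions (n : ℕ) : Finset (Finset (Finset (Fin n))) :=
  (pairPartitions n).filter NoncrossingPart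

open scoped Classical in
noncomputable def ncPartitions (n : ℕ) : Finset (Finset (Finset (Fin n))) :=
  Finset.univ.filter (fun π => IsPartitionOn Finset.univ π ∧ NoncrossingPart π)

/-!
A split of a pair partition `π` into two noncrossing sub-partitions is the same thing as a proper
2-colouring of its intersection graph; when that graph is bipartite, the colourings are obtained
from a fixed one by flipping colours on any set of connected components, so there are
`2 ^ cc(π)` of them. Summing over `π`, a pair (partition, split) is the same as a set `S` of
points together with noncrossing pair partitions of `S` and of its complement. Noncrossing pair
partitions of a `2l`-element chain are counted by `C_l` (decompose along the block through the
first point), and `S` can be chosen in `binom(2p, 2l)` ways.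
-/

namespace SimpleGraph

variable {V : Type*} {G : SimpleGraph V}

lemma Reachable.eq_of_forall_adj {β : Type*} {f : V → β} (hf : ∀ v w, G.Adj v w → f v = f w)
    {v w : V} (h : G.Reachable v w) : f v = f w := by
  obtain ⟨p⟩ := h
  induction p with
  | nil => rfl
  | cons ha _ ih => exact (hf _ _ ha).trans ih

/-- Along an edge both `c` and `χ` flip, so the set where they differ is a union of
components. -/
def Coloring.boolEquivOfColoring (χ : G.Coloring Bool) :
    G.Coloring Bool ≃ (G.ConnectedComponent → Bool) where
  toFun c := ConnectedComponent.lift (fun v => xor (c v) (χ v)) fun _ _ p _ =>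
    p.reachable.eq_of_forall_adj (f := fun v => xor (c v) (χ v)) fun _ _ h => by
      rw [Bool.eq_not.mpr (c.valid h).symm, Bool.eq_not.mpr (χ.valid h).symm, Bool.not_xor_not]
  invFun g := Coloring.mk (fun v => xor (g (G.connectedComponentMk v)) (χ v)) fun {v w} h => by
    rw [ConnectedComponent.connectedComponentMk_eq_of_adj h]
    simpa using χ.valid h
  left_inv c := by
    ext v
    exact Bool.bne_self_right (c v) (χ v)
  right_inv g := by
    funext C
    induction C using ConnectedComponent.ind
    exact Bool.bne_self_right _ _

lemma Colorable.card_coloring_bool [Finite V] (h : G.Colorable 2) :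
    Nat.card (G.Coloring Bool) = 2 ^ Nat.card G.ConnectedComponent := by
  rw [Nat.card_congr (Coloring.boolEquivOfColoring (G.recolorOfEquiv finTwoEquiv h.some)),
    Nat.card_fun, Nat.card_eq_fintype_card, Fintype.card_bool]

end SimpleGraph

section RankReindexing

variable {α : Type*} [LinearOrder α]

lemma Finset.filter_lt_orderEmbOfFin (T : Finset α) {k : ℕ} (h : #T = k) (i : Fin k) :
    {x ∈ T | x < T.orderEmbOfFin h i} = (Iio i).map (T.orderEmbOfFin h).toEmbedding := by
  set e := T.orderEmbOfFin h
  conv_lhs => rw [← T.map_orderEmbOfFin_univ h]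
  rw [filter_map]
  congr 1
  ext j
  simp [e]

lemma Finset.filter_orderEmbOfFin_lt (T : Finset α) {k : ℕ} (h : #T = k) (i : Fin k) :
    {x ∈ T | T.orderEmbOfFin h i < x} = (Ioi i).map (T.orderEmbOfFin h).toEmbedding := by
  set e := T.orderEmbOfFin h
  conv_lhs => rw [← T.map_orderEmbOfFin_univ h]
  rw [filter_map]
  congr 1
  ext j
  simp [e]

lemma Finset.sum_card_filter_lt_card_filter_gt {M : Type*} [AddCommMonoid M] (T : Finset α)
    (f : ℕ → ℕ → M) :
    ∑ j ∈ T, f #{x ∈ T | x < j} #{x ∈ T | j < x} = ∑ i ∈ range #T, f i (#T - 1 - i) := by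
  set e := T.orderIsoOfFin rfl
  rw [← Finset.sum_coe_sort T, ← e.toEquiv.sum_comp, ← Fin.sum_univ_eq_sum_range]
  refine Fintype.sum_congr _ _ fun i => ?_
  have he : (e.toEquiv i : α) = T.orderEmbOfFin rfl i := rfl
  simp only [he, T.filter_lt_orderEmbOfFin, T.filter_orderEmbOfFin_lt, card_map, Fin.card_Iio,
    Fin.card_Ioi]

end RankReindexing

lemma Finset.sum_range_two_mul_add_one_of_odd {M : Type*} [AddCommMonoid M] (f : ℕ → M)
    (hf : ∀ c, Odd c → f c = 0) (p : ℕ) :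
    ∑ c ∈ range (2 * p + 1), f c = ∑ l ∈ range (p + 1), f (2 * l) := by
  induction p with
  | zero => simp
  | succ p ih =>
    rw [show 2 * (p + 1) + 1 = 2 * p + 1 + 1 + 1 by ring, sum_range_succ, sum_range_succ, ih,
      hf _ (odd_two_mul_add_one p), add_zero, sum_range_succ (fun l => f (2 * l)) (p + 1),
      mul_add_one]

/-- The number of noncrossing pair partitions of a `k`-element chain. -/
def aeratedCatalan (k : ℕ) : ℕ := if Even k then catalan (k / 2) else 0

lemma aeratedCatalan_two_mul (l : ℕ) : aeratedCatalan (2 * l) = catalan l := by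
  simp [aeratedCatalan]

lemma aeratedCatalan_of_odd {k : ℕ} (hk : Odd k) : aeratedCatalan k = 0 := by
  simp [aeratedCatalan, Nat.not_even_iff_odd.mpr hk]

lemma aeratedCatalan_succ (k : ℕ) :
    aeratedCatalan (k + 1) = ∑ i ∈ range k, aeratedCatalan i * aeratedCatalan (k - 1 - i) := by
  obtain ⟨l, rfl | rfl⟩ := Nat.even_or_odd' k
  · rw [aeratedCatalan_of_odd (odd_two_mul_add_one l)]
    refine (sum_eq_zero fun i hi => ?_).symm
    have hi := mem_range.mp hi
    rcases Nat.even_or_odd i with ⟨t, rfl⟩ | hodd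
    · rw [aeratedCatalan_of_odd (k := 2 * l - 1 - (t + t)) ⟨l - t - 1, by omega⟩, mul_zero]
    · rw [aeratedCatalan_of_odd hodd, zero_mul]
  · rw [show 2 * l + 1 + 1 = 2 * (l + 1) by ring, aeratedCatalan_two_mul, catalan_succ,
      Fin.sum_univ_eq_sum_range (fun i => catalan i * catalan (l - i)),
      sum_range_two_mul_add_one_of_odd _ fun c hc => by rw [aeratedCatalan_of_odd hc, zero_mul]]
    refine sum_congr rfl fun i hi => ?_
    rw [show 2 * l + 1 - 1 - 2 * i = 2 * (l - i) by have := mem_range.mp hi; omega,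
      aeratedCatalan_two_mul, aeratedCatalan_two_mul]

section PairPartitions

variable {n : ℕ} {S : Finset (Fin n)} {π : Finset (Finset (Fin n))}

lemma isPairPartitionOn_iff :
    IsPairPartitionOn S π ↔
      (∀ V ∈ π, #V = 2) ∧ (π : Set (Finset (Fin n))).PairwiseDisjoint id ∧ π.biUnion id = S := by
  constructor
  · rintro ⟨⟨hsub, hcover⟩, htwo⟩
    refine ⟨htwo, fun V hV W hW hne => disjoint_left.mpr fun i hiV hiW => hne ?_, ?_⟩
    · obtain ⟨U, -, hU⟩ := hcover i ((hsub V hV).2 hiV)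
      exact (hU V ⟨hV, hiV⟩).trans (hU W ⟨hW, hiW⟩).symm
    · ext i
      simp only [mem_biUnion, id]
      exact ⟨fun ⟨V, hV, hi⟩ => (hsub V hV).2 hi, fun hi => (hcover i hi).exists⟩
  · rintro ⟨htwo, hdisj, rfl⟩
    refine ⟨⟨fun V hV => ⟨card_pos.mp (by simp [htwo V hV]), subset_biUnion_of_mem id hV⟩, ?_⟩,
      htwo⟩
    intro i hi
    obtain ⟨V, hV, hiV⟩ := mem_biUnion.mp hi
    exact ⟨V, ⟨hV, hiV⟩, fun W ⟨hW, hiW⟩ =>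
      hdisj.elim hW hV (not_disjoint_iff.mpr ⟨i, hiW, hiV⟩)⟩

lemma isPairPartitionOn_pair {a b : Fin n} (hab : a ≠ b) :
    IsPairPartitionOn {a, b} {{a, b}} :=
  isPairPartitionOn_iff.mpr ⟨by simpa using card_pair hab, by simp, by simp⟩

lemma IsPairPartitionOn.subset {A : Finset (Finset (Fin n))} (h : IsPairPartitionOn S π)
    (hA : A ⊆ π) : IsPairPartitionOn (A.biUnion id) A := by
  obtain ⟨htwo, hdisj, -⟩ := isPairPartitionOn_iff.mp h
  exact isPairPartitionOn_iff.mpr ⟨fun V hV => htwo V (hA hV), hdisj.subset hA, rfl⟩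

lemma IsPairPartitionOn.sdiff {A : Finset (Finset (Fin n))} (h : IsPairPartitionOn S π)
    (hA : A ⊆ π) : IsPairPartitionOn (S \ A.biUnion id) (π \ A) := by
  obtain ⟨-, hdisj, rfl⟩ := isPairPartitionOn_iff.mp h
  convert h.subset sdiff_subset using 1
  ext i
  simp only [mem_sdiff, mem_biUnion, id, not_exists, not_and]
  constructor
  · rintro ⟨⟨V, hV, hiV⟩, hi⟩
    exact ⟨V, ⟨hV, fun hVA => hi V hVA hiV⟩, hiV⟩
  · rintro ⟨V, ⟨hV, hVA⟩, hiV⟩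
    refine ⟨⟨V, hV, hiV⟩, fun W hW hiW => hVA ?_⟩
    rwa [hdisj.elim (hA hW) hV (not_disjoint_iff.mpr ⟨i, hiW, hiV⟩)] at hW

lemma IsPairPartitionOn.union {A B : Finset (Fin n)} {π₁ π₂ : Finset (Finset (Fin n))}
    (h₁ : IsPairPartitionOn A π₁) (h₂ : IsPairPartitionOn B π₂) (hAB : Disjoint A B) :
    IsPairPartitionOn (A ∪ B) (π₁ ∪ π₂) := by
  obtain ⟨htwo₁, hdisj₁, rfl⟩ := isPairPartitionOn_iff.mp h₁
  obtain ⟨htwo₂, hdisj₂, rfl⟩ := isPairPartitionOn_iff.mp h₂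
  refine isPairPartitionOn_iff.mpr ⟨fun V hV => ?_, ?_, union_biUnion⟩
  · rcases mem_union.mp hV with hV | hV
    exacts [htwo₁ V hV, htwo₂ V hV]
  · rw [coe_union]
    exact hdisj₁.union hdisj₂ fun V hV W hW _ =>
      hAB.mono (subset_biUnion_of_mem id hV) (subset_biUnion_of_mem id hW)

lemma IsPairPartitionOn.disjoint {A B : Finset (Fin n)} {π₁ π₂ : Finset (Finset (Fin n))}
    (h₁ : IsPairPartitionOn A π₁) (h₂ : IsPairPartitionOn B π₂) (hAB : Disjoint A B) :
    Disjoint π₁ π₂ :=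
  disjoint_left.mpr fun V hV₁ hV₂ => by
    obtain ⟨i, hi⟩ := (h₁.1.1 V hV₁).1
    exact disjoint_left.mp hAB ((h₁.1.1 V hV₁).2 hi) ((h₂.1.1 V hV₂).2 hi)

lemma IsPairPartitionOn.filter_subset_union {A B : Finset (Fin n)}
    {π₁ π₂ : Finset (Finset (Fin n))} (h₁ : IsPairPartitionOn A π₁)
    (h₂ : IsPairPartitionOn B π₂) (hAB : Disjoint A B) : {V ∈ π₁ ∪ π₂ | V ⊆ A} = π₁ := by
  ext V
  simp only [mem_filter, mem_union]
  constructor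
  · rintro ⟨hV | hV, hVA⟩
    · exact hV
    · obtain ⟨i, hi⟩ := (h₂.1.1 V hV).1
      exact absurd ((h₂.1.1 V hV).2 hi) (disjoint_left.mp hAB (hVA hi))
  · exact fun hV => ⟨Or.inl hV, (h₁.1.1 V hV).2⟩

lemma IsPairPartitionOn.exists_pair_mem {m : Fin n} (h : IsPairPartitionOn S π) (hm : m ∈ S) :
    ∃ j ∈ S, j ≠ m ∧ {m, j} ∈ π := by
  obtain ⟨V, ⟨hV, hmV⟩, -⟩ := h.1.2 m hm
  obtain ⟨j, hj⟩ := card_eq_one.mp (by rw [card_erase_of_mem hmV, h.2 V hV])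
  have hjV : j ∈ V.erase m := by simp [hj]
  refine ⟨j, (h.1.1 V hV).2 (mem_of_mem_erase hjV), ne_of_mem_erase hjV, ?_⟩
  rwa [← insert_erase hmV, hj] at hV

lemma NoncrossingPart.union {π₁ π₂ : Finset (Finset (Fin n))} (h₁ : NoncrossingPart π₁)
    (h₂ : NoncrossingPart π₂) (h : ∀ V ∈ π₁, ∀ W ∈ π₂, ¬ CrossSym V W) :
    NoncrossingPart (π₁ ∪ π₂) := by
  intro V hV W hW hne
  rcases mem_union.mp hV with hV | hV <;> rcases mem_union.mp hW with hW | hW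
  · exact h₁ V hV W hW hne
  · exact h V hV W hW
  · exact fun hc => h W hW V hV (Or.symm hc)
  · exact h₂ V hV W hW hne

lemma not_crossSym_of_subset {A B V W : Finset (Fin n)} (hV : V ⊆ A) (hW : W ⊆ B)
    (hgap : ∀ a ∈ A, ∀ a' ∈ A, ∀ b ∈ B, ¬ (a < b ∧ b < a')) : ¬ CrossSym V W := by
  rintro (⟨i, k, j, l, hik, hkj, -, hi, hj, hk, -⟩ | ⟨i, k, j, l, -, hkj, hjl, -, hj, hk, hl⟩)
  · exact hgap i (hV hi) j (hV hj) k (hW hk) ⟨hik, hkj⟩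
  · exact hgap k (hV hk) l (hV hl) j (hW hj) ⟨hkj, hjl⟩

open scoped Classical in
noncomputable def ncPairPartitionsOn (S : Finset (Fin n)) : Finset (Finset (Finset (Fin n))) :=
  univ.filter fun π => IsPairPartitionOn S π ∧ NoncrossingPart π

lemma mem_ncPairPartitionsOn :
    π ∈ ncPairPartitionsOn S ↔ IsPairPartitionOn S π ∧ NoncrossingPart π := by
  simp [ncPairPartitionsOn]

lemma ncPairPartitionsOn_empty : ncPairPartitionsOn (∅ : Finset (Fin n)) = {∅} := by
  ext π
  rw [mem_ncPairPartitionsOn, mem_singleton, isPairPartitionOn_iff]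
  constructor
  · rintro ⟨⟨htwo, -, hcover⟩, -⟩
    refine eq_empty_of_forall_notMem fun V hV => ?_
    have hV₀ : V = ∅ := subset_empty.mp (hcover ▸ subset_biUnion_of_mem id hV)
    simpa [hV₀] using htwo V hV
  · rintro rfl
    simp [NoncrossingPart]

lemma union_mem_ncPairPartitionsOn {A B : Finset (Fin n)} {π₁ π₂ : Finset (Finset (Fin n))}
    (h₁ : π₁ ∈ ncPairPartitionsOn A) (h₂ : π₂ ∈ ncPairPartitionsOn B) (hAB : Disjoint A B)
    (hgap : ∀ a ∈ A, ∀ a' ∈ A, ∀ b ∈ B, ¬ (a < b ∧ b < a')) :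
    π₁ ∪ π₂ ∈ ncPairPartitionsOn (A ∪ B) := by
  rw [mem_ncPairPartitionsOn] at *
  exact ⟨h₁.1.union h₂.1 hAB, h₁.2.union h₂.2 fun V hV W hW =>
    not_crossSym_of_subset (h₁.1.1.1 V hV).2 (h₂.1.1.1 W hW).2 hgap⟩

lemma filter_subset_mem_ncPairPartitionsOn {U : Finset (Fin n)} (h : π ∈ ncPairPartitionsOn S)
    (hU : ∀ x ∈ U, ∃ V ∈ π, x ∈ V ∧ V ⊆ U) : {V ∈ π | V ⊆ U} ∈ ncPairPartitionsOn U := by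
  obtain ⟨hπ, hnc⟩ := mem_ncPairPartitionsOn.mp h
  refine mem_ncPairPartitionsOn.mpr ⟨?_, fun V hV W hW => hnc V (mem_filter.mp hV).1 W
    (mem_filter.mp hW).1⟩
  convert hπ.subset (filter_subset _ π) using 1
  ext x
  simp only [mem_biUnion, mem_filter, id]
  constructor
  · intro hx
    obtain ⟨V, hV, hxV, hVU⟩ := hU x hx
    exact ⟨V, ⟨hV, hVU⟩, hxV⟩
  · rintro ⟨V, ⟨-, hVU⟩, hxV⟩
    exact hVU hxV

section FirstBlock

variable {m j : Fin n} {T : Finset (Fin n)}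

lemma subset_or_subset_of_pair_mem (hm : ∀ x ∈ T, m < x)
    (hπ : π ∈ ncPairPartitionsOn (insert m T)) (hmj : {m, j} ∈ π) {V : Finset (Fin n)}
    (hV : V ∈ π) (hne : V ≠ {m, j}) : V ⊆ {x ∈ T | x < j} ∨ V ⊆ {x ∈ T | j < x} := by
  obtain ⟨hpart, hnc⟩ := mem_ncPairPartitionsOn.mp hπ
  have hdisj : Disjoint V {m, j} := (isPairPartitionOn_iff.mp hpart).2.1 hV hmj hne
  have hside : ∀ x ∈ V, x ∈ T ∧ (x < j ∨ j < x) := fun x hx => by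
    have hxm : x ≠ m := fun h => disjoint_left.mp hdisj hx (by simp [h])
    have hxj : x ≠ j := fun h => disjoint_left.mp hdisj hx (by simp [h])
    exact ⟨(mem_insert.mp ((hpart.1.1 V hV).2 hx)).resolve_left hxm, hxj.lt_or_gt⟩
  by_contra! ⟨hin, hout⟩
  obtain ⟨a, haV, ha⟩ := not_subset.mp hin
  obtain ⟨b, hbV, hb⟩ := not_subset.mp hout
  have hja : j < a := (hside a haV).2.resolve_left fun h => ha (by simp [(hside a haV).1, h])
  have hbj : b < j := (hside b hbV).2.resolve_right fun h => hb (by simp [(hside b hbV).1, h])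
  exact hnc _ hmj V hV hne.symm
    (Or.inl ⟨m, b, j, a, hm b (hside b hbV).1, hbj, hja, by simp, by simp, hbV, haV⟩)

lemma disjoint_filter_lt_pair_union (hm : ∀ x ∈ T, m < x) :
    Disjoint {x ∈ T | x < j} ({m, j} ∪ {x ∈ T | j < x}) := by
  simp only [disjoint_left, mem_filter, mem_union, mem_insert, mem_singleton]
  rintro x ⟨hxT, hxj⟩ ((rfl | rfl) | ⟨-, hjx⟩)
  exacts [(hm x hxT).false, hxj.false, hxj.asymm hjx]

lemma disjoint_pair_filter_gt (hmj : m < j) : Disjoint {m, j} {x ∈ T | j < x} := by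
  simp only [disjoint_left, mem_filter, mem_insert, mem_singleton]
  rintro x (rfl | rfl) ⟨-, hjx⟩
  exacts [hmj.asymm hjx, hjx.false]

lemma union_pair_union_mem_ncPairPartitionsOn (hm : ∀ x ∈ T, m < x) (hj : j ∈ T)
    {π₁ π₂ : Finset (Finset (Fin n))} (h₁ : π₁ ∈ ncPairPartitionsOn {x ∈ T | x < j})
    (h₂ : π₂ ∈ ncPairPartitionsOn {x ∈ T | j < x}) :
    π₁ ∪ ({{m, j}} ∪ π₂) ∈ ncPairPartitionsOn (insert m T) := by
  have hmj : m < j := hm j hj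
  have hpair : {{m, j}} ∈ ncPairPartitionsOn {m, j} :=
    mem_ncPairPartitionsOn.mpr ⟨isPairPartitionOn_pair hmj.ne, by simp [NoncrossingPart]⟩
  have hunion : {x ∈ T | x < j} ∪ ({m, j} ∪ {x ∈ T | j < x}) = insert m T := by
    ext x
    simp only [mem_union, mem_filter, mem_insert, mem_singleton]
    constructor
    · rintro (⟨hx, -⟩ | (rfl | rfl) | ⟨hx, -⟩) <;> simp [*]
    · rintro (rfl | hx)
      · simp
      · rcases lt_trichotomy x j with h | rfl | h <;> simp [*]
  rw [← hunion]
  refine union_mem_ncPairPartitionsOn h₁ (union_mem_ncPairPartitionsOn hpair h₂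
    (disjoint_pair_filter_gt hmj) ?_) (disjoint_filter_lt_pair_union hm) ?_
  · simp only [mem_filter, mem_insert, mem_singleton]
    rintro a - a' (rfl | rfl) b ⟨-, hjb⟩ ⟨-, hba'⟩
    exacts [(hjb.trans hba').asymm hmj, hba'.asymm hjb]
  · simp only [mem_filter, mem_union, mem_insert, mem_singleton]
    rintro a ⟨haT, -⟩ a' ⟨-, ha'j⟩ b ((rfl | rfl) | ⟨-, hjb⟩) ⟨hab, hba'⟩
    exacts [(hm a haT).asymm hab, hba'.asymm ha'j, (hjb.trans hba').asymm ha'j]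

lemma filter_subset_mem_ncPairPartitionsOn_of_pair_mem (hm : ∀ x ∈ T, m < x)
    (hπ : π ∈ ncPairPartitionsOn (insert m T)) (hmj : {m, j} ∈ π) :
    {V ∈ π | V ⊆ {x ∈ T | x < j}} ∈ ncPairPartitionsOn {x ∈ T | x < j} ∧
      {V ∈ π | V ⊆ {x ∈ T | j < x}} ∈ ncPairPartitionsOn {x ∈ T | j < x} := by
  have hblock : ∀ x ∈ T, x ≠ j →
      ∃ V ∈ π, x ∈ V ∧ (V ⊆ {x ∈ T | x < j} ∨ V ⊆ {x ∈ T | j < x}) := by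
    intro x hxT hxj
    obtain ⟨V, ⟨hV, hxV⟩, -⟩ := (mem_ncPairPartitionsOn.mp hπ).1.1.2 x (mem_insert_of_mem hxT)
    refine ⟨V, hV, hxV, subset_or_subset_of_pair_mem hm hπ hmj hV ?_⟩
    rintro rfl
    simp only [mem_insert, mem_singleton] at hxV
    exact hxV.elim (hm x hxT).ne' hxj
  refine ⟨filter_subset_mem_ncPairPartitionsOn hπ fun x hx => ?_,
    filter_subset_mem_ncPairPartitionsOn hπ fun x hx => ?_⟩
  · obtain ⟨hxT, hxj⟩ := mem_filter.mp hx
    obtain ⟨V, hV, hxV, hVsub⟩ := hblock x hxT hxj.ne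
    exact ⟨V, hV, hxV, hVsub.resolve_right fun h => (mem_filter.mp (h hxV)).2.asymm hxj⟩
  · obtain ⟨hxT, hjx⟩ := mem_filter.mp hx
    obtain ⟨V, hV, hxV, hVsub⟩ := hblock x hxT hjx.ne'
    exact ⟨V, hV, hxV, hVsub.resolve_left fun h => (mem_filter.mp (h hxV)).2.asymm hjx⟩

lemma card_filter_pair_mem (hm : ∀ x ∈ T, m < x) (hj : j ∈ T) :
    #{π ∈ ncPairPartitionsOn (insert m T) | {m, j} ∈ π}
      = #(ncPairPartitionsOn {x ∈ T | x < j}) * #(ncPairPartitionsOn {x ∈ T | j < x}) := by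
  rw [← card_product]
  refine card_nbij' (fun π => ({V ∈ π | V ⊆ {x ∈ T | x < j}}, {V ∈ π | V ⊆ {x ∈ T | j < x}}))
    (fun q => q.1 ∪ ({{m, j}} ∪ q.2)) ?_ ?_ ?_ ?_
  · intro π hπ
    obtain ⟨hπ, hmjπ⟩ := mem_filter.mp (mem_coe.mp hπ)
    exact mem_product.mpr (filter_subset_mem_ncPairPartitionsOn_of_pair_mem hm hπ hmjπ)
  · intro q hq
    obtain ⟨h₁, h₂⟩ := mem_product.mp (mem_coe.mp hq)
    exact mem_filter.mpr ⟨union_pair_union_mem_ncPairPartitionsOn hm hj h₁ h₂, by simp⟩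
  · intro π hπ
    obtain ⟨hπ, hmjπ⟩ := mem_filter.mp (mem_coe.mp hπ)
    ext V
    simp only [mem_union, mem_filter, mem_singleton]
    constructor
    · rintro (⟨hV, -⟩ | rfl | ⟨hV, -⟩) <;> assumption
    · intro hV
      by_cases hVmj : V = {m, j}
      · exact Or.inr (Or.inl hVmj)
      · rcases subset_or_subset_of_pair_mem hm hπ hmjπ hV hVmj with h | h
        exacts [Or.inl ⟨hV, h⟩, Or.inr (Or.inr ⟨hV, h⟩)]
  · rintro ⟨π₁, π₂⟩ hq
    obtain ⟨h₁, h₂⟩ := mem_product.mp (mem_coe.mp hq)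
    have hp₁ := (mem_ncPairPartitionsOn.mp h₁).1
    have hp₂ := (mem_ncPairPartitionsOn.mp h₂).1
    have hpmj := isPairPartitionOn_pair (hm j hj).ne
    have hinner := disjoint_filter_lt_pair_union (j := j) hm
    have houter := disjoint_pair_filter_gt (T := T) (hm j hj)
    refine Prod.ext (hp₁.filter_subset_union (hpmj.union hp₂ houter) hinner) ?_
    dsimp only
    rw [union_comm ({{m, j}} : Finset (Finset (Fin n))), union_left_comm]
    exact hp₂.filter_subset_union (hp₁.union hpmj (disjoint_union_right.mp hinner).1)
      (disjoint_union_right.mpr ⟨(disjoint_union_right.mp hinner).2.symm, houter.symm⟩)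

lemma card_ncPairPartitionsOn_insert (hm : ∀ x ∈ T, m < x) :
    #(ncPairPartitionsOn (insert m T)) = ∑ j ∈ T,
      #(ncPairPartitionsOn {x ∈ T | x < j}) * #(ncPairPartitionsOn {x ∈ T | j < x}) := by
  have hfibers : ncPairPartitionsOn (insert m T)
      = T.biUnion fun j => {π ∈ ncPairPartitionsOn (insert m T) | {m, j} ∈ π} := by
    ext π
    simp only [mem_biUnion, mem_filter]
    refine ⟨fun hπ => ?_, fun ⟨_, _, hπ, _⟩ => hπ⟩
    obtain ⟨j, hj, hjm, hmj⟩ :=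
      (mem_ncPairPartitionsOn.mp hπ).1.exists_pair_mem (mem_insert_self m T)
    exact ⟨j, (mem_insert.mp hj).resolve_left hjm, hπ, hmj⟩
  rw [hfibers, card_biUnion]
  · exact sum_congr rfl fun j hj => card_filter_pair_mem hm hj
  · intro j hj j' _ hne
    simp only [Function.onFun, disjoint_left, mem_filter]
    rintro π ⟨hπ, hmj⟩ ⟨-, hmj'⟩
    have hdisj := (isPairPartitionOn_iff.mp (mem_ncPairPartitionsOn.mp hπ).1).2.1
    have heq : ({m, j} : Finset (Fin n)) = {m, j'} :=
      hdisj.elim hmj hmj' (not_disjoint_iff.mpr ⟨m, by simp, by simp⟩)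
    have hj' : j ∈ ({m, j'} : Finset (Fin n)) := heq ▸ mem_insert_of_mem (mem_singleton_self j)
    simp only [mem_insert, mem_singleton] at hj'
    exact hj'.elim (hm j hj).ne' hne

end FirstBlock

theorem card_ncPairPartitionsOn (S : Finset (Fin n)) :
    #(ncPairPartitionsOn S) = aeratedCatalan #S := by
  induction hk : #S using Nat.strong_induction_on generalizing S with
  | _ k ih =>
    rcases S.eq_empty_or_nonempty with rfl | hS
    · subst hk
      simp [ncPairPartitionsOn_empty, aeratedCatalan]
    set m := S.min' hS
    set T := S.erase m
    have hmT : ∀ x ∈ T, m < x := fun x hx => S.min'_lt_of_mem_erase_min' hS hx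
    have hTS : #T < k := hk ▸ card_erase_lt_of_mem (S.min'_mem hS)
    have hrec : ∀ j ∈ T, #(ncPairPartitionsOn {x ∈ T | x < j}) *
        #(ncPairPartitionsOn {x ∈ T | j < x})
          = aeratedCatalan #{x ∈ T | x < j} * aeratedCatalan #{x ∈ T | j < x} := fun j _ => by
      rw [ih _ ((card_filter_le _ _).trans_lt hTS) _ rfl,
        ih _ ((card_filter_le _ _).trans_lt hTS) _ rfl]
    rw [← hk, ← insert_erase (S.min'_mem hS), card_ncPairPartitionsOn_insert hmT,
      sum_congr rfl hrec, T.sum_card_filter_lt_card_filter_gt (aeratedCatalan · * aeratedCatalan ·),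
      card_insert_of_notMem (notMem_erase m S), aeratedCatalan_succ]

open scoped Classical in
noncomputable def noncrossingSplits (π : Finset (Finset (Fin n))) :
    Finset (Finset (Finset (Fin n))) :=
  π.powerset.filter fun A => NoncrossingPart A ∧ NoncrossingPart (π \ A)

lemma mem_noncrossingSplits {A : Finset (Finset (Fin n))} :
    A ∈ noncrossingSplits π ↔ A ⊆ π ∧ NoncrossingPart A ∧ NoncrossingPart (π \ A) := by
  simp [noncrossingSplits]

def noncrossingSplitsEquivColoring (π : Finset (Finset (Fin n))) :
    noncrossingSplits π ≃ (interGraph π).Coloring Bool where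
  toFun A := SimpleGraph.Coloring.mk (fun V => decide (V.1 ∈ A.1)) fun {V W} hVW => by
    obtain ⟨-, hA, hAc⟩ := mem_noncrossingSplits.mp A.2
    have hne : V.1 ≠ W.1 := Subtype.coe_ne_coe.mpr hVW.1
    by_cases hV : V.1 ∈ A.1 <;> by_cases hW : W.1 ∈ A.1
    · exact absurd hVW.2 (hA _ hV _ hW hne)
    · simp [hV, hW]
    · simp [hV, hW]
    · exact absurd hVW.2 (hAc _ (mem_sdiff.mpr ⟨V.2, hV⟩) _ (mem_sdiff.mpr ⟨W.2, hW⟩) hne)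
  invFun c := ⟨(π.attach.filter fun V => c V).map (Function.Embedding.subtype _), by
    have hcross : ∀ V W : π, V.1 ≠ W.1 → CrossSym V.1 W.1 → c V ≠ c W := fun V W hne h =>
      c.valid ⟨Subtype.coe_ne_coe.mp hne, h⟩
    refine mem_noncrossingSplits.mpr ⟨?_, ?_, ?_⟩
    · intro V hV
      simp only [mem_map, mem_filter, mem_attach, true_and, Function.Embedding.coe_subtype] at hV
      obtain ⟨V, -, rfl⟩ := hV
      exact V.2
    · intro V hV W hW hne h
      simp only [mem_map, mem_filter, mem_attach, true_and, Function.Embedding.coe_subtype] at hV hW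
      obtain ⟨V, hV, rfl⟩ := hV
      obtain ⟨W, hW, rfl⟩ := hW
      exact hcross V W hne h (hV.trans hW.symm)
    · intro V hV W hW hne h
      simp only [mem_sdiff, mem_map, mem_filter, mem_attach, true_and,
        Function.Embedding.coe_subtype, not_exists, not_and] at hV hW
      have hV' := hV.2 ⟨V, hV.1⟩
      have hW' := hW.2 ⟨W, hW.1⟩
      exact hcross ⟨V, hV.1⟩ ⟨W, hW.1⟩ hne h (by simp_all)⟩
  left_inv A := by
    ext V
    simpa [SimpleGraph.Coloring.mk] using fun h => (mem_noncrossingSplits.mp A.2).1 h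
  right_inv c := by
    ext V
    simp [SimpleGraph.Coloring.mk]

lemma card_noncrossingSplits (h : IsBipartitePart π) : #(noncrossingSplits π) = 2 ^ ccCount π := by
  rw [← Nat.card_eq_finsetCard, Nat.card_congr (noncrossingSplitsEquivColoring π)]
  exact h.card_coloring_bool

lemma mem_biPairPartitions :
    π ∈ biPairPartitions n ↔ IsPairPartition n π ∧ IsBipartitePart π := by
  simp [biPairPartitions, pairPartitions]

lemma isBipartitePart_of_mem_noncrossingSplits {A : Finset (Finset (Fin n))}
    (hA : A ∈ noncrossingSplits π) : IsBipartitePart π :=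
  ⟨(interGraph π).recolorOfEquiv finTwoEquiv.symm (noncrossingSplitsEquivColoring π ⟨A, hA⟩)⟩

lemma sum_card_noncrossingSplits (n : ℕ) :
    ∑ π ∈ biPairPartitions n, #(noncrossingSplits π)
      = ∑ S : Finset (Fin n), #(ncPairPartitionsOn S) * #(ncPairPartitionsOn Sᶜ) := by
  simp only [← card_product, ← card_sigma]
  refine card_nbij' (fun x => ⟨x.2.biUnion id, (x.2, x.1 \ x.2)⟩) (fun y => ⟨y.2.1 ∪ y.2.2, y.2.1⟩)
    ?_ ?_ ?_ ?_
  · rintro ⟨π, A⟩ hx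
    obtain ⟨hπ, hA⟩ := mem_sigma.mp (mem_coe.mp hx)
    obtain ⟨hAπ, hncA, hncAc⟩ := mem_noncrossingSplits.mp hA
    have hpart : IsPairPartitionOn univ π := (mem_biPairPartitions.mp hπ).1
    refine mem_sigma.mpr ⟨mem_univ _, mem_product.mpr ⟨mem_ncPairPartitionsOn.mpr
      ⟨hpart.subset hAπ, hncA⟩, mem_ncPairPartitionsOn.mpr ⟨?_, hncAc⟩⟩⟩
    rw [compl_eq_univ_sdiff]
    exact hpart.sdiff hAπ
  · rintro ⟨S, π₁, π₂⟩ hy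
    obtain ⟨-, hy⟩ := mem_sigma.mp (mem_coe.mp hy)
    obtain ⟨⟨hp₁, hnc₁⟩, ⟨hp₂, hnc₂⟩⟩ :=
      And.imp mem_ncPairPartitionsOn.mp mem_ncPairPartitionsOn.mp (mem_product.mp hy)
    have hsplit : π₁ ∈ noncrossingSplits (π₁ ∪ π₂) := by
      rw [mem_noncrossingSplits, union_sdiff_cancel_left (hp₁.disjoint hp₂ disjoint_compl_right)]
      exact ⟨subset_union_left, hnc₁, hnc₂⟩
    have hpart : IsPairPartition n (π₁ ∪ π₂) := by
      simpa [IsPairPartition] using hp₁.union hp₂ disjoint_compl_right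
    exact mem_sigma.mpr ⟨mem_biPairPartitions.mpr
      ⟨hpart, isBipartitePart_of_mem_noncrossingSplits hsplit⟩, hsplit⟩
  · rintro ⟨π, A⟩ hx
    obtain ⟨-, hA⟩ := mem_sigma.mp (mem_coe.mp hx)
    simp only [union_sdiff_of_subset (mem_noncrossingSplits.mp hA).1]
  · rintro ⟨S, π₁, π₂⟩ hy
    obtain ⟨-, hy⟩ := mem_sigma.mp (mem_coe.mp hy)
    obtain ⟨hp₁, hp₂⟩ :=
      And.imp (fun h => (mem_ncPairPartitionsOn.mp h).1) (fun h => (mem_ncPairPartitionsOn.mp h).1)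
        (mem_product.mp hy)
    simp only [(isPairPartitionOn_iff.mp hp₁).2.2,
      union_sdiff_cancel_left (hp₁.disjoint hp₂ disjoint_compl_right)]

end PairPartitions

theorem sum_bipartite_pair_partitions_general (p : ℕ) :
    ∑ π ∈ biPairPartitions (2 * p), 2 ^ ccCount π
      = ∑ l ∈ Finset.range (p + 1),
          Nat.choose (2 * p) (2 * l) * catalan l * catalan (p - l) := by
  calc ∑ π ∈ biPairPartitions (2 * p), 2 ^ ccCount π
      = ∑ π ∈ biPairPartitions (2 * p), #(noncrossingSplits π) :=
        sum_congr rfl fun π hπ => (card_noncrossingSplits (mem_biPairPartitions.mp hπ).2).symm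
    _ = ∑ S : Finset (Fin (2 * p)), aeratedCatalan #S * aeratedCatalan (2 * p - #S) := by
        simp only [sum_card_noncrossingSplits, card_ncPairPartitionsOn, card_compl,
          Fintype.card_fin]
    _ = ∑ c ∈ range (2 * p + 1),
          (2 * p).choose c * (aeratedCatalan c * aeratedCatalan (2 * p - c)) := by
        rw [← powerset_univ, sum_powerset_apply_card (fun c => aeratedCatalan c *
          aeratedCatalan (2 * p - c)), card_univ, Fintype.card_fin]
        rfl
    _ = ∑ l ∈ range (p + 1), (2 * p).choose (2 * l) * catalan l * catalan (p - l) := by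
        rw [sum_range_two_mul_add_one_of_odd _ fun c hc => by
          rw [aeratedCatalan_of_odd hc, zero_mul, mul_zero]]
        refine sum_congr rfl fun l _ => ?_
        rw [← Nat.mul_sub, aeratedCatalan_two_mul, aeratedCatalan_two_mul, mul_assoc]

theorem sum_bipartite_pair_partitions (p : ℕ) (hp : 0 < p) :
    ∑ π ∈ biPairPartitions (2 * p), 2 ^ ccCount π
      = ∑ l ∈ Finset.range (p + 1),
          Nat.choose (2 * p) (2 * l) * catalan l * catalan (p - l) :=
  sum_bipartite_pair_partitions_general p
end

section
/- Every pair partition π of [p] decomposes uniquely as follows: there is a bijection π ↦ (π̂, (π_T)_{T ∈ π̂}) where π̂ is a noncrossing partition of [p] whose blocks are the unions of the crossing-connected components of π, and for each block T of π̂, π_T is a connected pair partition of T. In particular the number of blocks of π̂ equals cc(π), the number of connected components of the intersection graph of π. -/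
open Finset

/-!
The heart of the matter is that the supports of two distinct components `C`, `D` never cross.
Suppose `i < k < j < l` with `i, j` in `C` and `k, l` in `D`. For an order-convex set `I`,
membership in `I` propagates along a crossing of two blocks that each lie on one side of `I`, so
if every block of a component lies on one side of `I`, so does its whole support. No block
`{a, b}` of `C` crosses a block of `D`, hence every block of `D` lies on one side of the gap
`(a, b)`, and so do `k` and `l`. Linking of two disjoint pairs is symmetric, so `a` and `b` lie on
one side of `(k, l)`, for every block of `C`; propagating through `C` puts `i` and `j` on one
side of `(k, l)`, which they are not.

Conversely, gluing connected partitions of the blocks of a noncrossing `σ` gives a partition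
whose components are exactly the blocks of `σ`, since a crossing between blocks of `g T` and
`g T'` would make `T` and `T'` cross.
-/

open Set (uIoo)

theorem SimpleGraph.Reachable.mem_of_adj_closed {V : Type*} {G : SimpleGraph V} {S : Set V}
    {u v : V} (hS : ∀ x y, G.Reachable u x → G.Adj x y → x ∈ S → y ∈ S)
    (huv : G.Reachable u v) (hu : u ∈ S) : v ∈ S := by
  induction (SimpleGraph.reachable_iff_reflTransGen u v).mp huv with
  | refl => exact hu
  | tail hux hxy ih =>
    have hux' := (SimpleGraph.reachable_iff_reflTransGen _ _).mpr hux
    exact hS _ _ hux' hxy (ih hux')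

theorem Set.mem_uIoo_iff_mem_uIoo_comm {α : Type*} [LinearOrder α] {x y k l : α}
    (hxk : x ≠ k) (hyk : y ≠ k) (hxl : x ≠ l) (hyl : y ≠ l) :
    (k ∈ uIoo x y ↔ l ∈ uIoo x y) ↔ (x ∈ uIoo k l ↔ y ∈ uIoo k l) := by
  simp only [Set.uIoo, Set.mem_Ioo, min_lt_iff, lt_max_iff]
  grind

variable {n : ℕ}

theorem Crosses.mono {V W V' W' : Finset (Fin n)} (h : Crosses V W) (hV : V ⊆ V')
    (hW : W ⊆ W') : Crosses V' W' := by
  obtain ⟨i, k, j, l, hik, hkj, hjl, hi, hj, hk, hl⟩ := h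
  exact ⟨i, k, j, l, hik, hkj, hjl, hV hi, hV hj, hW hk, hW hl⟩

theorem CrossSym.mono {V W V' W' : Finset (Fin n)} (h : CrossSym V W) (hV : V ⊆ V')
    (hW : W ⊆ W') : CrossSym V' W' :=
  h.imp (·.mono hV hW) (·.mono hW hV)

theorem CrossSym.symm {V W : Finset (Fin n)} (h : CrossSym V W) : CrossSym W V :=
  Or.symm h

theorem CrossSym.mem_iff_mem {I : Set (Fin n)} (hI : I.OrdConnected) {V W : Finset (Fin n)}
    (hV : ∀ x ∈ V, ∀ y ∈ V, x ∈ I ↔ y ∈ I) (hW : ∀ x ∈ W, ∀ y ∈ W, x ∈ I ↔ y ∈ I)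
    (h : CrossSym V W) {x y : Fin n} (hx : x ∈ V) (hy : y ∈ W) : x ∈ I ↔ y ∈ I := by
  suffices key : ∀ V W : Finset (Fin n), (∀ x ∈ V, ∀ y ∈ V, x ∈ I ↔ y ∈ I) →
      (∀ x ∈ W, ∀ y ∈ W, x ∈ I ↔ y ∈ I) → Crosses V W → ∀ x ∈ V, ∀ y ∈ W, x ∈ I ↔ y ∈ I by
    rcases h with h | h
    · exact key V W hV hW h x hx y hy
    · exact (key W V hW hV h y hy x hx).symm
  rintro V W hV hW ⟨i, k, j, l, hik, hkj, hjl, hi, hj, hk, hl⟩ x hx y hy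
  constructor
  · intro hxI
    have hkI : k ∈ I := hI.out ((hV x hx i hi).mp hxI) ((hV x hx j hj).mp hxI) ⟨hik.le, hkj.le⟩
    exact (hW k hk y hy).mp hkI
  · intro hyI
    have hjI : j ∈ I := hI.out ((hW y hy k hk).mp hyI) ((hW y hy l hl).mp hyI) ⟨hkj.le, hjl.le⟩
    exact (hV x hx j hj).mpr hjI

theorem mem_uIoo_iff_of_not_crossSym {U W : Finset (Fin n)} (hUW : Disjoint U W)
    (hnc : ¬ CrossSym U W) {a b : Fin n} (ha : a ∈ U) (hb : b ∈ U) {x y : Fin n} (hx : x ∈ W)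
    (hy : y ∈ W) : x ∈ uIoo a b ↔ y ∈ uIoo a b := by
  wlog hab : a ≤ b generalizing a b
  · rw [Set.uIoo_comm]; exact this hb ha (le_of_not_ge hab)
  have key : ∀ x ∈ W, ∀ y ∈ W, x ∈ Set.Ioo a b → y ∈ Set.Ioo a b := by
    intro x hx y hy ⟨hax, hxb⟩
    by_contra hyI
    have hya : y ≠ a := fun h => Finset.disjoint_left.mp hUW ha (h ▸ hy)
    have hyb : y ≠ b := fun h => Finset.disjoint_left.mp hUW hb (h ▸ hy)
    rcases lt_or_gt_of_ne hya with hya | hya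
    · exact hnc (Or.inr ⟨y, a, x, b, hya, hax, hxb, hy, hx, ha, hb⟩)
    · have hby : b < y := lt_of_le_of_ne (not_lt.mp fun h => hyI ⟨hya, h⟩) hyb.symm
      exact hnc (Or.inl ⟨a, x, b, y, hax, hxb, hby, ha, hb, hx, hy⟩)
  rw [Set.uIoo_of_le hab]
  exact ⟨key x hx y hy, key y hy x hx⟩

namespace IsPartitionOn

variable {S : Finset (Fin n)} {π : Finset (Finset (Fin n))}

theorem eq_of_mem_of_mem (hπ : IsPartitionOn S π) {V W : Finset (Fin n)} (hV : V ∈ π)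
    (hW : W ∈ π) {i : Fin n} (hiV : i ∈ V) (hiW : i ∈ W) : V = W := by
  obtain ⟨U, _, hU⟩ := hπ.2 i ((hπ.1 V hV).2 hiV)
  exact (hU V ⟨hV, hiV⟩).trans (hU W ⟨hW, hiW⟩).symm

theorem disjoint_of_ne (hπ : IsPartitionOn S π) {V W : Finset (Fin n)} (hV : V ∈ π)
    (hW : W ∈ π) (hVW : V ≠ W) : Disjoint V W :=
  Finset.disjoint_left.mpr fun _ hiV hiW => hVW (hπ.eq_of_mem_of_mem hV hW hiV hiW)

theorem exists_mem (hπ : IsPartitionOn S π) {i : Fin n} (hi : i ∈ S) : ∃ V ∈ π, i ∈ V :=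
  (hπ.2 i hi).exists

end IsPartitionOn

section Components

variable {π : Finset (Finset (Fin n))}

noncomputable def componentSupport (π : Finset (Finset (Fin n))) (V : {V // V ∈ π}) :
    Finset (Fin n) :=
  open scoped Classical in
  Finset.univ.filter fun i : Fin n =>
    ∃ W, ∃ hW : W ∈ π, i ∈ W ∧ (interGraph π).Reachable V ⟨W, hW⟩

theorem mem_componentSupport {V : {V // V ∈ π}} {i : Fin n} :
    i ∈ componentSupport π V ↔
      ∃ W, ∃ hW : W ∈ π, i ∈ W ∧ (interGraph π).Reachable V ⟨W, hW⟩ := by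
  simp [componentSupport]

theorem mem_compPart {C : Finset (Fin n)} : C ∈ compPart π ↔ ∃ V, componentSupport π V = C := by
  classical
  simp only [compPart, Finset.mem_image, Finset.mem_attach, true_and]
  rfl

theorem componentSupport_mem_compPart (V : {V // V ∈ π}) : componentSupport π V ∈ compPart π :=
  mem_compPart.mpr ⟨V, rfl⟩

theorem subset_componentSupport_of_reachable {V W : {V // V ∈ π}}
    (h : (interGraph π).Reachable V W) : W.1 ⊆ componentSupport π V :=
  fun _ hi => mem_componentSupport.mpr ⟨W.1, W.2, hi, h⟩

theorem componentSupport_congr {V V' : {V // V ∈ π}} (h : (interGraph π).Reachable V V') :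
    componentSupport π V = componentSupport π V' := by
  ext i
  simp only [mem_componentSupport]
  exact ⟨fun ⟨W, hW, hi, hr⟩ => ⟨W, hW, hi, h.symm.trans hr⟩,
    fun ⟨W, hW, hi, hr⟩ => ⟨W, hW, hi, h.trans hr⟩⟩

variable (hπ : IsPartitionOn Finset.univ π)
include hπ

theorem reachable_of_mem_componentSupport {V W : {V // V ∈ π}} {i : Fin n} (hiW : i ∈ W.1)
    (hi : i ∈ componentSupport π V) : (interGraph π).Reachable V W := by
  obtain ⟨W', hW', hiW', hr⟩ := mem_componentSupport.mp hi
  obtain rfl : W' = W.1 := hπ.eq_of_mem_of_mem hW' W.2 hiW' hiW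
  exact hr

theorem subset_componentSupport_iff {V W : {V // V ∈ π}} :
    W.1 ⊆ componentSupport π V ↔ (interGraph π).Reachable V W := by
  refine ⟨fun h => ?_, subset_componentSupport_of_reachable⟩
  obtain ⟨i, hi⟩ := (hπ.1 W.1 W.2).1
  exact reachable_of_mem_componentSupport hπ hi (h hi)

theorem componentSupport_eq_iff {V V' : {V // V ∈ π}} :
    componentSupport π V = componentSupport π V' ↔ (interGraph π).Reachable V V' := by
  refine ⟨fun h => ?_, componentSupport_congr⟩
  have := subset_componentSupport_of_reachable (SimpleGraph.Reachable.refl V)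
  rw [h, subset_componentSupport_iff hπ] at this
  exact this.symm

theorem mem_iff_mem_of_mem_componentSupport {I : Set (Fin n)} (hI : I.OrdConnected)
    {V : {V // V ∈ π}}
    (hconst : ∀ W, (interGraph π).Reachable V W → ∀ x ∈ W.1, ∀ y ∈ W.1, x ∈ I ↔ y ∈ I)
    {x y : Fin n} (hx : x ∈ componentSupport π V) (hy : y ∈ componentSupport π V) :
    x ∈ I ↔ y ∈ I := by
  obtain ⟨v, hv⟩ := (hπ.1 V.1 V.2).1
  suffices key : ∀ W, (interGraph π).Reachable V W → ∀ y ∈ W.1, v ∈ I ↔ y ∈ I by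
    obtain ⟨X, hX, hxX, hrX⟩ := mem_componentSupport.mp hx
    obtain ⟨Y, hY, hyY, hrY⟩ := mem_componentSupport.mp hy
    exact (key _ hrX x hxX).symm.trans (key _ hrY y hyY)
  intro W hW
  refine hW.mem_of_adj_closed (S := {W | ∀ y ∈ W.1, v ∈ I ↔ y ∈ I}) ?_
    fun y hy => hconst V .rfl v hv y hy
  intro X Y hX hXY hvX y hy
  obtain ⟨z, hz⟩ := (hπ.1 X.1 X.2).1
  exact (hvX z hz).trans
    (hXY.2.mem_iff_mem hI (hconst X hX) (hconst Y (hX.trans hXY.reachable)) hz hy)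

theorem mem_uIoo_iff_of_not_reachable {V U : {V // V ∈ π}}
    (hVU : ¬ (interGraph π).Reachable V U) {a b : Fin n} (ha : a ∈ U.1) (hb : b ∈ U.1)
    {x y : Fin n} (hx : x ∈ componentSupport π V) (hy : y ∈ componentSupport π V) :
    x ∈ uIoo a b ↔ y ∈ uIoo a b := by
  refine mem_iff_mem_of_mem_componentSupport hπ (I := uIoo a b) Set.ordConnected_Ioo
    (fun W hW => ?_) hx hy
  have hWU : W ≠ U := by rintro rfl; exact hVU hW
  refine fun x hx y hy => mem_uIoo_iff_of_not_crossSym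
    (hπ.disjoint_of_ne U.2 W.2 (fun h => hWU (Subtype.ext h).symm)) (fun hc => ?_) ha hb hx hy
  exact hVU (hW.trans (SimpleGraph.Adj.reachable ⟨hWU, hc.symm⟩))

theorem not_crosses_componentSupport {V V' : {V // V ∈ π}}
    (hVV' : ¬ (interGraph π).Reachable V V') :
    ¬ Crosses (componentSupport π V) (componentSupport π V') := by
  rintro ⟨i, k, j, l, hik, hkj, hjl, hi, hj, hk, hl⟩
  have hconst : ∀ U, (interGraph π).Reachable V U → ∀ x ∈ U.1, ∀ y ∈ U.1,
      x ∈ uIoo k l ↔ y ∈ uIoo k l := by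
    intro U hU x hx y hy
    have hV'U : ¬ (interGraph π).Reachable V' U := fun h => hVV' (hU.trans h.symm)
    have hkU : k ∉ U.1 := fun hkU => hV'U (reachable_of_mem_componentSupport hπ hkU hk)
    have hlU : l ∉ U.1 := fun hlU => hV'U (reachable_of_mem_componentSupport hπ hlU hl)
    exact (Set.mem_uIoo_iff_mem_uIoo_comm (ne_of_mem_of_not_mem hx hkU)
      (ne_of_mem_of_not_mem hy hkU) (ne_of_mem_of_not_mem hx hlU)
      (ne_of_mem_of_not_mem hy hlU)).mp (mem_uIoo_iff_of_not_reachable hπ hV'U hx hy hk hl)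
  have hij :=
    mem_iff_mem_of_mem_componentSupport hπ (I := uIoo k l) Set.ordConnected_Ioo hconst hi hj
  rw [Set.uIoo_of_le (hkj.trans hjl).le] at hij
  exact (lt_asymm hik) (hij.mpr ⟨hkj, hjl⟩).1

end Components

def interGraphHomOfSubset {ρ π : Finset (Finset (Fin n))} (h : ρ ⊆ π) :
    interGraph ρ →g interGraph π where
  toFun X := ⟨X.1, h X.2⟩
  map_rel' hXY := ⟨fun e => hXY.1 (Subtype.ext (Subtype.mk.inj e)), hXY.2⟩

theorem interGraph_reachable_of_adj_closed {ρ π : Finset (Finset (Fin n))} (h : ρ ⊆ π)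
    (hclosed : ∀ X Y : {V // V ∈ π}, X.1 ∈ ρ → (interGraph π).Adj X Y → Y.1 ∈ ρ)
    {A B : {V // V ∈ ρ}}
    (hAB : (interGraph π).Reachable (interGraphHomOfSubset h A) (interGraphHomOfSubset h B)) :
    (interGraph ρ).Reachable A B := by
  obtain ⟨hB, hAB⟩ := hAB.mem_of_adj_closed
    (S := {X : {V // V ∈ π} | ∃ hX : X.1 ∈ ρ, (interGraph ρ).Reachable A ⟨X.1, hX⟩})
    (fun X Y _ hXY ⟨hX, hAX⟩ => ⟨hclosed X Y hX hXY, hAX.trans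
      (SimpleGraph.Adj.reachable ⟨fun e => hXY.1 (Subtype.ext (Subtype.mk.inj e)), hXY.2⟩)⟩)
    ⟨A.2, .rfl⟩
  exact hAB

section Decomposition

variable {π : Finset (Finset (Fin n))} (hπ : IsPartitionOn Finset.univ π)
include hπ

theorem isPartitionOn_compPart : IsPartitionOn Finset.univ (compPart π) := by
  refine ⟨fun C hC => ?_, fun i _ => ?_⟩
  · obtain ⟨V, rfl⟩ := mem_compPart.mp hC
    exact ⟨(hπ.1 V.1 V.2).1.mono (subset_componentSupport_of_reachable .rfl),
      Finset.subset_univ _⟩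
  · obtain ⟨V, hV, hiV⟩ := hπ.exists_mem (Finset.mem_univ i)
    refine ⟨componentSupport π ⟨V, hV⟩, ⟨componentSupport_mem_compPart _,
      subset_componentSupport_of_reachable .rfl hiV⟩, ?_⟩
    rintro C ⟨hC, hiC⟩
    obtain ⟨V', rfl⟩ := mem_compPart.mp hC
    exact componentSupport_congr (reachable_of_mem_componentSupport hπ (W := ⟨V, hV⟩) hiV hiC)

theorem noncrossingPart_compPart : NoncrossingPart (compPart π) := by
  intro C hC D hD hCD hcross
  obtain ⟨V, rfl⟩ := mem_compPart.mp hC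
  obtain ⟨V', rfl⟩ := mem_compPart.mp hD
  have hVV' : ¬ (interGraph π).Reachable V V' := fun h => hCD (componentSupport_congr h)
  rcases hcross with h | h
  · exact not_crosses_componentSupport hπ hVV' h
  · exact not_crosses_componentSupport hπ (fun h => hVV' h.symm) h

theorem mem_restrictPart_componentSupport {V : {V // V ∈ π}} {W : Finset (Fin n)} :
    W ∈ restrictPart π (componentSupport π V) ↔
      ∃ hW : W ∈ π, (interGraph π).Reachable V ⟨W, hW⟩ := by
  rw [restrictPart, Finset.mem_filter]
  exact ⟨fun ⟨hW, hWV⟩ => ⟨hW, (subset_componentSupport_iff hπ).mp hWV⟩,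
    fun ⟨hW, hVW⟩ => ⟨hW, subset_componentSupport_of_reachable hVW⟩⟩

theorem isPartitionOn_restrictPart (V : {V // V ∈ π}) :
    IsPartitionOn (componentSupport π V) (restrictPart π (componentSupport π V)) := by
  refine ⟨fun W hW => ?_, fun i hi => ?_⟩
  · obtain ⟨hW, hVW⟩ := (mem_restrictPart_componentSupport hπ).mp hW
    exact ⟨(hπ.1 W hW).1, subset_componentSupport_of_reachable hVW⟩
  · obtain ⟨W, hW, hiW, hVW⟩ := mem_componentSupport.mp hi
    refine ⟨W, ⟨(mem_restrictPart_componentSupport hπ).mpr ⟨hW, hVW⟩, hiW⟩, ?_⟩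
    rintro U ⟨hU, hiU⟩
    exact hπ.eq_of_mem_of_mem (Finset.mem_filter.mp hU).1 hW hiU hiW

theorem isConnectedPart_restrictPart (V : {V // V ∈ π}) :
    IsConnectedPart (restrictPart π (componentSupport π V)) := by
  have hsub : restrictPart π (componentSupport π V) ⊆ π := Finset.filter_subset _ _
  have hreach : ∀ A : {W // W ∈ restrictPart π (componentSupport π V)},
      (interGraph π).Reachable V (interGraphHomOfSubset hsub A) := fun A =>
    ((mem_restrictPart_componentSupport hπ).mp A.2).2
  have : Nonempty {W // W ∈ restrictPart π (componentSupport π V)} :=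
    ⟨⟨V.1, (mem_restrictPart_componentSupport hπ).mpr ⟨V.2, .rfl⟩⟩⟩
  refine SimpleGraph.Connected.mk fun A B => interGraph_reachable_of_adj_closed hsub
    (fun X Y hX hXY => ?_) ((hreach A).symm.trans (hreach B))
  obtain ⟨_, hVX⟩ := (mem_restrictPart_componentSupport hπ).mp hX
  exact (mem_restrictPart_componentSupport hπ).mpr ⟨Y.2, hVX.trans hXY.reachable⟩

theorem card_compPart : (compPart π).card = ccCount π := by
  let f : (interGraph π).ConnectedComponent → compPart π :=
    SimpleGraph.ConnectedComponent.lift (fun V => ⟨componentSupport π V,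
      componentSupport_mem_compPart V⟩) fun _ _ q _ => Subtype.ext (componentSupport_congr ⟨q⟩)
  have hf : Function.Bijective f := by
    constructor
    · refine SimpleGraph.ConnectedComponent.ind₂ fun V V' h => ?_
      exact SimpleGraph.ConnectedComponent.sound
        ((componentSupport_eq_iff hπ).mp (congrArg Subtype.val h))
    · rintro ⟨C, hC⟩
      obtain ⟨V, rfl⟩ := mem_compPart.mp hC
      exact ⟨(interGraph π).connectedComponentMk V, rfl⟩
  rw [ccCount, Nat.card_eq_of_bijective f hf, Nat.card_eq_finsetCard]

end Decomposition

theorem subset_of_forall_restrictPart_eq {π π' : Finset (Finset (Fin n))}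
    (hres : ∀ T ∈ compPart π, restrictPart π T = restrictPart π' T) : π ⊆ π' := by
  intro U hU
  have hUT : U ∈ restrictPart π (componentSupport π ⟨U, hU⟩) :=
    Finset.mem_filter.mpr ⟨hU, subset_componentSupport_of_reachable (.refl ⟨U, hU⟩)⟩
  rw [hres _ (componentSupport_mem_compPart _)] at hUT
  exact (Finset.mem_filter.mp hUT).1

section Gluing

variable {S : Finset (Fin n)} {σ : Finset (Finset (Fin n))}
  {g : Finset (Fin n) → Finset (Finset (Fin n))}

theorem mem_of_mem_biUnion_of_subset (hσ : IsPartitionOn S σ)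
    (hg : ∀ T ∈ σ, IsPartitionOn T (g T)) {T : Finset (Fin n)} (hT : T ∈ σ) {U : Finset (Fin n)}
    (hU : U ∈ σ.biUnion g) (hUT : U ⊆ T) : U ∈ g T := by
  obtain ⟨T', hT', hUT'⟩ := Finset.mem_biUnion.mp hU
  obtain ⟨i, hi⟩ := ((hg T' hT').1 U hUT').1
  obtain rfl : T' = T := hσ.eq_of_mem_of_mem hT' hT (((hg T' hT').1 U hUT').2 hi) (hUT hi)
  exact hUT'

theorem isPartitionOn_biUnion (hσ : IsPartitionOn S σ)
    (hg : ∀ T ∈ σ, IsPartitionOn T (g T)) : IsPartitionOn S (σ.biUnion g) := by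
  refine ⟨fun U hU => ?_, fun i hi => ?_⟩
  · obtain ⟨T, hT, hUT⟩ := Finset.mem_biUnion.mp hU
    exact ⟨((hg T hT).1 U hUT).1, ((hg T hT).1 U hUT).2.trans ((hσ.1 T hT).2)⟩
  · obtain ⟨T, hT, hiT⟩ := hσ.exists_mem hi
    obtain ⟨U, hU, hiU⟩ := (hg T hT).exists_mem hiT
    refine ⟨U, ⟨Finset.mem_biUnion.mpr ⟨T, hT, hU⟩, hiU⟩, ?_⟩
    rintro U' ⟨hU', hiU'⟩
    obtain ⟨T', hT', hU'T'⟩ := Finset.mem_biUnion.mp hU'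
    obtain rfl : T' = T := hσ.eq_of_mem_of_mem hT' hT (((hg T' hT').1 U' hU'T').2 hiU') hiT
    exact (hg T' hT').eq_of_mem_of_mem hU'T' hU hiU' hiU

theorem restrictPart_biUnion (hσ : IsPartitionOn S σ)
    (hg : ∀ T ∈ σ, IsPartitionOn T (g T)) {T : Finset (Fin n)} (hT : T ∈ σ) :
    restrictPart (σ.biUnion g) T = g T := by
  ext U
  rw [restrictPart, Finset.mem_filter]
  exact ⟨fun ⟨hU, hUT⟩ => mem_of_mem_biUnion_of_subset hσ hg hT hU hUT,
    fun hU => ⟨Finset.mem_biUnion.mpr ⟨T, hT, hU⟩, ((hg T hT).1 U hU).2⟩⟩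

theorem componentSupport_biUnion (hg : ∀ T ∈ σ, IsPartitionOn T (g T)) (hσnc : NoncrossingPart σ)
    (hconn : ∀ T ∈ σ, IsConnectedPart (g T)) {T : Finset (Fin n)} (hT : T ∈ σ)
    (U : {U // U ∈ σ.biUnion g}) (hU : U.1 ∈ g T) : componentSupport (σ.biUnion g) U = T := by
  have hsub : g T ⊆ σ.biUnion g := Finset.subset_biUnion_of_mem g hT
  apply Finset.Subset.antisymm
  · intro i hi
    obtain ⟨W, hW, hiW, hUW⟩ := mem_componentSupport.mp hi
    have hWT : W ∈ g T := by
      refine hUW.mem_of_adj_closed (S := {X : {U // U ∈ σ.biUnion g} | X.1 ∈ g T}) ?_ hU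
      intro X Y _ hXY hX
      obtain ⟨T', hT', hYT'⟩ := Finset.mem_biUnion.mp Y.2
      obtain rfl : T = T' := by
        by_contra hTT'
        exact hσnc T hT T' hT' hTT'
          (hXY.2.mono ((hg T hT).1 X hX).2 ((hg T' hT').1 Y hYT').2)
      exact hYT'
    exact ((hg T hT).1 W hWT).2 hiW
  · intro i hi
    obtain ⟨W, hW, hiW⟩ := (hg T hT).exists_mem hi
    have hUW := ((hconn T hT).preconnected ⟨U.1, hU⟩ ⟨W, hW⟩).map (interGraphHomOfSubset hsub)
    exact subset_componentSupport_of_reachable hUW hiW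

theorem compPart_biUnion (hσ : IsPartitionOn S σ)
    (hg : ∀ T ∈ σ, IsPartitionOn T (g T)) (hσnc : NoncrossingPart σ)
    (hconn : ∀ T ∈ σ, IsConnectedPart (g T)) :
    compPart (σ.biUnion g) = σ := by
  ext C
  rw [mem_compPart]
  constructor
  · rintro ⟨U, rfl⟩
    obtain ⟨T, hT, hUT⟩ := Finset.mem_biUnion.mp U.2
    rw [componentSupport_biUnion hg hσnc hconn hT U hUT]
    exact hT
  · intro hC
    obtain ⟨i, hi⟩ := (hσ.1 C hC).1
    obtain ⟨U, hU, -⟩ := (hg C hC).exists_mem hi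
    exact ⟨⟨U, Finset.mem_biUnion.mpr ⟨C, hC, hU⟩⟩,
      componentSupport_biUnion hg hσnc hconn hC _ hU⟩

end Gluing

/-- The decomposition of a pair partition into its noncrossing closure and
connected restrictions: well-definedness, injectivity and surjectivity. -/
theorem pair_partition_component_decomposition (p : ℕ) :
    -- the map π ↦ (compPart π, restrictions) lands in the right set, and |compPart π| = cc(π)
    (∀ π : Finset (Finset (Fin p)), IsPairPartition p π →
      (IsPartitionOn Finset.univ (compPart π) ∧ NoncrossingPart (compPart π) ∧
        (∀ T ∈ compPart π,
          IsPairPartitionOn T (restrictPart π T) ∧ IsConnectedPart (restrictPart π T)) ∧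
        (compPart π).card = ccCount π)) ∧
    -- injectivity
    (∀ π π' : Finset (Finset (Fin p)), IsPairPartition p π → IsPairPartition p π' →
      compPart π = compPart π' →
      (∀ T ∈ compPart π, restrictPart π T = restrictPart π' T) → π = π') ∧
    -- surjectivity
    (∀ (σ : Finset (Finset (Fin p))) (g : Finset (Fin p) → Finset (Finset (Fin p))),
      IsPartitionOn Finset.univ σ → NoncrossingPart σ →
      (∀ T ∈ σ, IsPairPartitionOn T (g T) ∧ IsConnectedPart (g T)) →
      ∃ π : Finset (Finset (Fin p)), IsPairPartition p π ∧ compPart π = σ ∧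
        ∀ T ∈ σ, restrictPart π T = g T) := by
  refine ⟨fun π hπ => ?_, fun π π' _ _ hcomp hres => ?_, fun σ g hσ hσnc hg => ?_⟩
  · refine ⟨isPartitionOn_compPart hπ.1, noncrossingPart_compPart hπ.1, fun T hT => ?_,
      card_compPart hπ.1⟩
    obtain ⟨V, rfl⟩ := mem_compPart.mp hT
    exact ⟨⟨isPartitionOn_restrictPart hπ.1 V, fun W hW => hπ.2 W (Finset.mem_filter.mp hW).1⟩,
      isConnectedPart_restrictPart hπ.1 V⟩
  · exact (subset_of_forall_restrictPart_eq hres).antisymm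
      (subset_of_forall_restrictPart_eq fun T hT => (hres T (hcomp ▸ hT)).symm)
  · have hgp : ∀ T ∈ σ, IsPartitionOn T (g T) := fun T hT => (hg T hT).1.1
    have hconn : ∀ T ∈ σ, IsConnectedPart (g T) := fun T hT => (hg T hT).2
    refine ⟨σ.biUnion g, ⟨isPartitionOn_biUnion hσ hgp, fun U hU => ?_⟩,
      compPart_biUnion hσ hgp hσnc hconn, fun T hT => restrictPart_biUnion hσ hgp hT⟩
    obtain ⟨T, hT, hUT⟩ := Finset.mem_biUnion.mp hU
    exact (hg T hT).1.2 U hUT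
end
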